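/- Let Q be a finite type with a binary operation · whose left translations L_a(x) = a·x and right translations R_a(x) = x·a are bijections for every a ∈ Q, and let \ denote left division (x\z is the unique y with x·y = z). Then the operations A(x,y) = x·y and ^{(132)}A(x,y) = y\x are orthogonal if and only if for all x, y, z ∈ Q, (x·z)·x = (y·z)·y implies x = y. -/

import Mathlib

/-! Substituting `(a, b) = (x·z, x)`, which is a bijection of `Q × Q` with inverse
`(a, b) ↦ (b, b\a)`, turns the pair `(a·b, b\a)` into `((x·z)·x, z)`. Orthogonality thus
says that `x ↦ (x·z)·x` is injective for every `z`, which on a finite set is bijectivity. -/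

open Function

theorem injective_fun_prod_mk_snd_iff {α β γ : Type*} (f : α → β → γ) :
    Injective (fun p : α × β => (f p.1 p.2, p.2)) ↔ ∀ b, Injective (fun a => f a b) := by
  constructor
  · intro hf b a a' h
    exact congrArg Prod.fst (hf (congrArg (fun c => (c, b)) h) : (a, b) = (a', b))
  · rintro hf ⟨a, b⟩ ⟨a', b'⟩ h
    obtain ⟨h₁, rfl⟩ := Prod.mk.inj h
    exact congrArg (·, b) (hf b h₁)

section LeftDivision

variable {Q : Type*} {mul ld : Q → Q → Q}

theorem ld_mul_of_injective (hL : ∀ a : Q, Injective (fun x => mul a x))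
    (hld : ∀ x z : Q, mul x (ld x z) = z) (x z : Q) : ld x (mul x z) = z :=
  hL x (hld x (mul x z))

theorem bijective_mul_prod_mk_fst (hL : ∀ a : Q, Injective (fun x => mul a x))
    (hld : ∀ x z : Q, mul x (ld x z) = z) :
    Bijective (fun p : Q × Q => (mul p.1 p.2, p.1)) :=
  bijective_iff_has_inverse.2
    ⟨fun q => (q.2, ld q.2 q.1),
      fun p => by simp only [ld_mul_of_injective hL hld],
      fun q => by simp only [hld]⟩

end LeftDivision

theorem orth_parastrophe_132_general {Q : Type*} [Finite Q] (mul : Q → Q → Q)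
    (hL : ∀ a : Q, Function.Bijective (fun x => mul a x))
    (ld : Q → Q → Q)
    (hld : ∀ x z : Q, mul x (ld x z) = z) :
    Function.Bijective (fun p : Q × Q => (mul p.1 p.2, ld p.2 p.1)) ↔
      ∀ x y z : Q, mul (mul x z) x = mul (mul y z) y → x = y := by
  have hL_inj : ∀ a : Q, Injective (fun x => mul a x) := fun a => (hL a).1
  have hsubst : (fun p : Q × Q => (mul p.1 p.2, ld p.2 p.1)) ∘
      (fun p : Q × Q => (mul p.1 p.2, p.1)) = fun p : Q × Q => (mul (mul p.1 p.2) p.1, p.2) := by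
    funext p
    simp only [comp_apply, ld_mul_of_injective hL_inj hld]
  rw [← Bijective.of_comp_iff _ (bijective_mul_prod_mk_fst hL_inj hld), hsubst,
    ← Finite.injective_iff_bijective, injective_fun_prod_mk_snd_iff fun x z => mul (mul x z) x]
  exact ⟨fun h x y z => @h z x y, fun h z x y => h x y z⟩

/-- For a finite quasigroup `(Q, ·)` with left division `\`,
the operation `A(x,y) = x·y` and its (132)-parastrophe `A^{(132)}(x,y) = y\x`
are orthogonal iff `(x·z)·x = (y·z)·y → x = y` for all `x y z`. -/
theorem orth_parastrophe_132 {Q : Type*} [Finite Q] (mul : Q → Q → Q)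
    (hL : ∀ a : Q, Function.Bijective (fun x => mul a x))
    (hR : ∀ a : Q, Function.Bijective (fun x => mul x a))
    (ld : Q → Q → Q)
    (hld : ∀ x z : Q, mul x (ld x z) = z) :
    Function.Bijective (fun p : Q × Q => (mul p.1 p.2, ld p.2 p.1)) ↔
      ∀ x y z : Q, mul (mul x z) x = mul (mul y z) y → x = y :=
  orth_parastrophe_132_general mul hL ld hld
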